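/- arXiv:1803.05342 — 3 statements merged into one kernel-verified Lean document; each statement's English description precedes it below -/
import Mathlib

section
/- Let d > 1 be a positive integer and let ω(d) denote the number of distinct prime divisors of d. If d ≤ 2 + 2^{ω(d)+1}, then d ∈ {2, 3, 4, 5, 6, 10}. -/
/-!
The radical of `d` is a product of `ω(d)` distinct integers `≥ 2`, hence at least `(ω(d) + 1)!`,
and `(n + 1)!` outgrows `2 + 2 ^ (n + 1)` from `n = 3` on. So `ω(d) ≤ 2`, which forces `d ≤ 10`,
and the remaining values are checked by factoring them.
-/

open Nat

/-- The `k`-th smallest element of such a set is at least `k + 1`. -/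
theorem Finset.factorial_card_succ_le_prod (s : Finset ℕ) (hs : ∀ x ∈ s, 2 ≤ x) :
    (s.card + 1)! ≤ ∏ x ∈ s, x := by
  induction s using Finset.induction_on_max with
  | empty => simp
  | insert a s hlt ih =>
    have ha : a ∉ s := fun h => (hlt a h).false
    have hsub : s ⊆ Finset.Ico 2 a := fun x hx =>
      Finset.mem_Ico.2 ⟨hs x (Finset.mem_insert_of_mem hx), hlt x hx⟩
    have hcard : s.card + 2 ≤ a := by
      have := Finset.card_le_card hsub
      have := hs a (Finset.mem_insert_self a s)
      simp only [Nat.card_Ico] at *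
      omega
    rw [Finset.card_insert_of_notMem ha, Finset.prod_insert ha, Nat.factorial_succ]
    exact Nat.mul_le_mul hcard (ih fun x hx => hs x (Finset.mem_insert_of_mem hx))

theorem Nat.factorial_card_primeFactors_succ_le {d : ℕ} (hd : d ≠ 0) :
    (d.primeFactors.card + 1)! ≤ d :=
  (Finset.factorial_card_succ_le_prod _ fun _ hp =>
      (Nat.prime_of_mem_primeFactors hp).two_le).trans
    (Nat.le_of_dvd (Nat.pos_of_ne_zero hd) (Nat.prod_primeFactors_dvd d))

theorem Nat.two_add_two_pow_lt_factorial {n : ℕ} (hn : 4 ≤ n) : 2 + 2 ^ n < n ! := by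
  induction n, hn using Nat.le_induction with
  | base => decide
  | succ n hn ih =>
    rw [pow_succ, Nat.factorial_succ]
    nlinarith

/-- If `d > 1` and `d ≤ 2 + 2^(ω(d)+1)`, where `ω(d)` is the number of distinct prime
divisors of `d`, then `d ∈ {2, 3, 4, 5, 6, 10}`. -/
theorem stmt4 (d : ℕ) (hd : 1 < d)
    (h : d ≤ 2 + 2 ^ (d.primeFactors.card + 1)) :
    d = 2 ∨ d = 3 ∨ d = 4 ∨ d = 5 ∨ d = 6 ∨ d = 10 := by
  have hω : d.primeFactors.card ≤ 2 := by
    by_contra! hω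
    have := Nat.two_add_two_pow_lt_factorial (n := d.primeFactors.card + 1) (by omega)
    have := Nat.factorial_card_primeFactors_succ_le (d := d) (by omega)
    omega
  have hd10 : d ≤ 10 := h.trans (by grw [hω] <;> norm_num)
  interval_cases d <;> simp_all [← Nat.toFinset_factors]
end

section
/- Let n be an odd squarefree positive integer and for each prime p | n let ζ_p = ζ_n^{n/p}. Define 𝔹_n = {x ∈ ℤ/nℤ : for every prime p | n, the representative of x mod p in (-p/2, p/2] has absolute value > 1/2}, i.e., x ≢ 0 (mod p) for every prime p | n. Then for any integer i coprime to n, ζ_n^i ∈ {ζ_n^b : b ∈ 𝔹_n}, and in general ζ_n^i = μ(γ(i)) ∑_{b ∈ 𝔹_n, b ≡ i (mod n/γ(i))} ζ_n^b, where γ(i) = ∏_{p | n, p | i} p. -/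
open Finset

private lemma zpow_emod_eq {ζ : ℂ} (hne : ζ ≠ 0) {n : ℕ} (hone : ζ ^ (n : ℤ) = 1) (x : ℤ) :
    ζ ^ (x % (n : ℤ)) = ζ ^ x := by
  conv_rhs => rw [← Int.emod_add_mul_ediv x (n : ℤ)]
  rw [zpow_add₀ hne, zpow_mul, hone, one_zpow, mul_one]

private lemma sum_moebius_divisors {g : ℕ} (hg : g ≠ 0) :
    (∑ d ∈ g.divisors, (ArithmeticFunction.moebius d : ℤ)) = if g = 1 then 1 else 0 := by
  rw [← ArithmeticFunction.coe_mul_zeta_apply, ArithmeticFunction.moebius_mul_coe_zeta,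
    ArithmeticFunction.one_apply]

private lemma ramanujan_one {k : ℕ} (hk : 0 < k) {ξ : ℂ} (hξ : IsPrimitiveRoot ξ k) :
    ∑ t ∈ (Finset.range k).filter (fun t => Nat.Coprime t k), ξ ^ t
      = ((ArithmeticFunction.moebius k : ℤ) : ℂ) := by
  classical
  have step1 : ∑ t ∈ (Finset.range k).filter (fun t => Nat.Coprime t k), ξ ^ t
      = ∑ t ∈ Finset.range k, ∑ d ∈ k.divisors.filter (· ∣ t),
          ((ArithmeticFunction.moebius d : ℤ) : ℂ) * ξ ^ t := by
    rw [Finset.sum_filter]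
    refine Finset.sum_congr rfl fun t _ => ?_
    have hdiveq : k.divisors.filter (· ∣ t) = (Nat.gcd t k).divisors := by
      ext d
      simp only [Finset.mem_filter, Nat.mem_divisors, Nat.dvd_gcd_iff]
      constructor
      · rintro ⟨⟨h1, h2⟩, h3⟩; exact ⟨⟨h3, h1⟩, fun h => h2 (Nat.eq_zero_of_gcd_eq_zero_right h)⟩
      · rintro ⟨⟨h1, h2⟩, _⟩; exact ⟨⟨h2, hk.ne'⟩, h1⟩
    rw [hdiveq, ← Finset.sum_mul, ← Int.cast_sum,
      sum_moebius_divisors (Nat.gcd_ne_zero_right hk.ne')]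
    unfold Nat.Coprime
    split_ifs with h1 h2 h2 <;> simp_all
  rw [step1, Finset.sum_comm' (t' := k.divisors)
    (s' := fun d => (Finset.range k).filter (d ∣ ·)) (by intro t d; simp; tauto)]
  have inner : ∀ d ∈ k.divisors,
      ∑ t ∈ (Finset.range k).filter (d ∣ ·), ((ArithmeticFunction.moebius d : ℤ) : ℂ) * ξ ^ t
        = ((ArithmeticFunction.moebius d : ℤ) : ℂ) * (if d = k then 1 else 0) := by
    intro d hd
    obtain ⟨hdk, -⟩ := Nat.mem_divisors.mp hd
    have hdpos : 0 < d := Nat.pos_of_mem_divisors hd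
    rw [← Finset.mul_sum]
    congr 1
    have hre : ∑ t ∈ (Finset.range k).filter (d ∣ ·), ξ ^ t
        = ∑ s ∈ Finset.range (k / d), (ξ ^ d) ^ s := by
      rw [Finset.sum_nbij' (i := fun t => t / d) (j := fun s => d * s)]
      · intro t ht
        simp only [Finset.mem_filter, Finset.mem_range] at ht
        exact Finset.mem_range.mpr (Nat.div_lt_div_of_lt_of_dvd hdk ht.1)
      · intro s hs
        simp only [Finset.mem_range] at hs
        refine Finset.mem_filter.mpr ⟨Finset.mem_range.mpr ?_, dvd_mul_right _ _⟩
        calc d * s < d * (k / d) := (mul_lt_mul_iff_right₀ hdpos).mpr hs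
        _ = k := Nat.mul_div_cancel' hdk
      · intro t ht
        exact Nat.mul_div_cancel' (Finset.mem_filter.mp ht).2
      · intro s _
        exact Nat.mul_div_cancel_left _ hdpos
      · intro t ht
        rw [← pow_mul, Nat.mul_div_cancel' (Finset.mem_filter.mp ht).2]
    rw [hre]
    have hkd : k = d * (k / d) := (Nat.mul_div_cancel' hdk).symm
    have hprim : IsPrimitiveRoot (ξ ^ d) (k / d) := hξ.pow hk hkd
    rcases eq_or_lt_of_le (Nat.one_le_iff_ne_zero.mpr
      (Nat.div_ne_zero_iff_of_dvd hdk |>.mpr ⟨hk.ne', hdpos.ne'⟩)) with h1 | h1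
    · have hdk' : d = k := by rw [hkd, ← h1, mul_one]
      rw [← h1, if_pos hdk']
      simp
    · rw [hprim.geom_sum_eq_zero h1, if_neg]
      intro h
      subst h
      rw [Nat.div_self hk] at h1
      exact lt_irrefl _ h1
  rw [Finset.sum_congr rfl inner]
  simp [Finset.sum_ite_eq' k.divisors k, Nat.mem_divisors, hk.ne']





/-- For `n` odd squarefree, `ζ` a complex primitive `n`-th root of unity and any integer `i`,
`ζ^i = μ(γ(i)) ∑_{b ∈ 𝔹_n, b ≡ i (mod n/γ(i))} ζ^b`, where `γ(i)` is the product of the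
primes dividing both `n` and `i`, and `𝔹_n` consists of the residues mod `n` divisible by
no prime divisor of `n`. -/
theorem stmt9 (n : ℕ) (hn : 0 < n) (hodd : Odd n) (hsf : Squarefree n)
    (ζ : ℂ) (hζ : IsPrimitiveRoot ζ n) (i : ℤ) :
    ζ ^ i =
      ((ArithmeticFunction.moebius
          (∏ p ∈ n.primeFactors.filter (fun (p : ℕ) => (p : ℤ) ∣ i), p) : ℤ) : ℂ) *
        ∑ b ∈ (Finset.range n).filter
            (fun b => (∀ p ∈ n.primeFactors, ¬ p ∣ b) ∧
              (b : ℤ) ≡ i [ZMOD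
                ((n : ℤ) / (∏ p ∈ n.primeFactors.filter (fun (p : ℕ) => (p : ℤ) ∣ i), p))]),
          ζ ^ b := by
  classical
  set Q := n.primeFactors.filter (fun (p : ℕ) => (p : ℤ) ∣ i) with hQdef
  set γ : ℕ := ∏ p ∈ Q, p with hγdef
  have hQprime : ∀ p ∈ Q, p.Prime :=
    fun p hp => Nat.prime_of_mem_primeFactors (Finset.mem_filter.mp hp).1
  have hγdvd : γ ∣ n :=
    dvd_trans (Finset.prod_dvd_prod_of_subset _ _ _ (Finset.filter_subset _ _))
      (Nat.prod_primeFactors_dvd n)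
  have hγpos : 0 < γ := Finset.prod_pos fun p hp => (hQprime p hp).pos
  set m := n / γ with hmdef
  have hnm : n = γ * m := (Nat.mul_div_cancel' hγdvd).symm
  have hmpos : 0 < m := by
    rcases Nat.eq_zero_or_pos m with h | h
    · rw [h, mul_zero] at hnm; omega
    · exact h
  obtain ⟨hcop, hγsf, hmsf⟩ := Nat.squarefree_mul_iff.mp (hnm ▸ hsf)
  have hγi : (γ : ℤ) ∣ i := by
    have h1 : γ ∣ i.natAbs := by
      refine Finset.prod_primes_dvd _ (fun p hp => (hQprime p hp).prime) (fun p hp => ?_)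
      have h2 := Int.natAbs_dvd_natAbs.mpr (Finset.mem_filter.mp hp).2
      simpa using h2
    exact dvd_trans (Int.natCast_dvd_natCast.mpr h1) (Int.natAbs_dvd.mpr dvd_rfl)
  have hmz : (n : ℤ) / (γ : ℤ) = (m : ℤ) := by
    rw [hnm]; push_cast
    rw [Int.mul_ediv_cancel_left _ (by exact_mod_cast hγpos.ne')]
  rw [hmz]
  have hζne : ζ ≠ 0 := hζ.ne_zero hn.ne'
  have hζn1 : ζ ^ (n : ℤ) = 1 := by
    rw [zpow_natCast]; exact hζ.pow_eq_one
  have hξ : IsPrimitiveRoot (ζ ^ m) γ := hζ.pow hn (by rw [hnm, mul_comm])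
  have hprimeQ : ∀ p : ℕ, p.Prime → p ∣ γ → p ∈ Q := by
    intro p hp hdvd
    obtain ⟨q, hq, hpq⟩ := (hp.prime.dvd_finset_prod_iff _).mp hdvd
    rwa [(Nat.prime_dvd_prime_iff_eq hp (hQprime q hq)).mp hpq]
  have hnz : ((γ : ℤ) * (m : ℤ)) = (n : ℤ) := by exact_mod_cast hnm.symm
  clear_value γ m
  -- the summand identity
  have hpow : ∀ t : ℕ, ζ ^ (((i + (m : ℤ) * t) % (n : ℤ)).toNat) = ζ ^ i * (ζ ^ m) ^ t := by
    intro t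
    have h0 : 0 ≤ (i + (m : ℤ) * t) % (n : ℤ) :=
      Int.emod_nonneg _ (by exact_mod_cast hn.ne')
    rw [← zpow_natCast, Int.toNat_of_nonneg h0, zpow_emod_eq hζne hζn1,
      zpow_add₀ hζne, zpow_mul, zpow_natCast, zpow_natCast]
  -- key bijection
  have key : ∑ b ∈ (Finset.range n).filter
        (fun b => (∀ p ∈ n.primeFactors, ¬ p ∣ b) ∧ (b : ℤ) ≡ i [ZMOD (m : ℤ)]), ζ ^ b
      = ∑ t ∈ (Finset.range γ).filter (fun t => Nat.Coprime t γ), ζ ^ i * (ζ ^ m) ^ t := by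
    refine Finset.sum_nbij' (i := fun b => ((((b : ℤ) - i) / (m : ℤ)) % (γ : ℤ)).toNat)
      (j := fun t => ((i + (m : ℤ) * t) % (n : ℤ)).toNat) ?_ ?_ ?_ ?_ ?_
    · -- forward membership
      intro b hb
      beta_reduce
      rw [Finset.mem_filter, Finset.mem_range] at hb
      have hbr := hb.1
      have hbP := hb.2.1
      have hbM := hb.2.2
      have hmd : (m : ℤ) ∣ (b : ℤ) - i := by
        have := Int.ModEq.dvd hbM
        exact (dvd_sub_comm).mp this
      set s : ℤ := ((b : ℤ) - i) / (m : ℤ) with hsdef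
      have hbs : (b : ℤ) = i + (m : ℤ) * s := by
        rw [hsdef, Int.mul_ediv_cancel' hmd]; ring
      have htnn : 0 ≤ s % (γ : ℤ) := Int.emod_nonneg _ (by exact_mod_cast hγpos.ne')
      rw [Finset.mem_filter, Finset.mem_range]
      constructor
      · have : s % (γ : ℤ) < (γ : ℤ) := Int.emod_lt_of_pos _ (by exact_mod_cast hγpos)
        omega
      · -- coprimality
        by_contra hnc
        obtain ⟨p, hp, hpt, hpγ⟩ := Nat.Prime.not_coprime_iff_dvd.mp hnc
        have hpQ : p ∈ Q := hprimeQ p hp hpγ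
        have hpi : (p : ℤ) ∣ i := (Finset.mem_filter.mp hpQ).2
        have hps : (p : ℤ) ∣ s := by
          have h1 : (p : ℤ) ∣ s % (γ : ℤ) := by
            have : ((s % (γ : ℤ)).toNat : ℤ) = s % (γ : ℤ) := Int.toNat_of_nonneg htnn
            rw [← this]
            exact_mod_cast hpt
          have h2 : (p : ℤ) ∣ (γ : ℤ) := Int.natCast_dvd_natCast.mpr hpγ
          have h3 := Int.emod_add_mul_ediv s (γ : ℤ)
          calc (p : ℤ) ∣ s % (γ : ℤ) + (γ : ℤ) * (s / (γ : ℤ)) :=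
              dvd_add h1 (h2.mul_right _)
          _ = s := h3
        have hpb : (p : ℤ) ∣ (b : ℤ) := by
          rw [hbs]
          exact dvd_add hpi (Dvd.dvd.mul_left hps _)
        have hpn : p ∈ n.primeFactors := (Finset.mem_filter.mp hpQ).1
        exact hbP p hpn (Int.natCast_dvd_natCast.mp hpb)
    · -- backward membership
      intro t ht
      beta_reduce
      rw [Finset.mem_filter, Finset.mem_range] at ht
      obtain ⟨htγ, htcop⟩ := ht
      have h0 : 0 ≤ (i + (m : ℤ) * t) % (n : ℤ) :=
        Int.emod_nonneg _ (by exact_mod_cast hn.ne')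
      set b : ℕ := ((i + (m : ℤ) * t) % (n : ℤ)).toNat with hbdef
      have hbz : (b : ℤ) = (i + (m : ℤ) * t) % (n : ℤ) := Int.toNat_of_nonneg h0
      have hbM : (b : ℤ) ≡ i + (m : ℤ) * t [ZMOD (n : ℤ)] := by
        rw [hbz]
        exact Int.emod_emod_of_dvd _ dvd_rfl
      have hndvd : (n : ℤ) ∣ (i + (m : ℤ) * t) - (b : ℤ) := Int.ModEq.dvd hbM
      rw [Finset.mem_filter, Finset.mem_range]
      refine ⟨?_, ?_, ?_⟩
      · have : (i + (m : ℤ) * t) % (n : ℤ) < (n : ℤ) :=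
          Int.emod_lt_of_pos _ (by exact_mod_cast hn)
        omega
      · -- no prime of n divides b
        intro p hpn hpb
        have hpp : p.Prime := Nat.prime_of_mem_primeFactors hpn
        have hpdn : p ∣ n := Nat.dvd_of_mem_primeFactors hpn
        have hpz : (p : ℤ) ∣ i + (m : ℤ) * t := by
          have h1 : (p : ℤ) ∣ (b : ℤ) := Int.natCast_dvd_natCast.mpr hpb
          have h2 : (p : ℤ) ∣ (n : ℤ) := Int.natCast_dvd_natCast.mpr hpdn
          have h3 : (p : ℤ) ∣ (i + (m : ℤ) * t) - (b : ℤ) := dvd_trans h2 hndvd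
          have h4 : i + (m : ℤ) * t = (b : ℤ) + ((i + (m : ℤ) * t) - (b : ℤ)) := by ring
          rw [h4]
          exact dvd_add h1 h3
        by_cases hpQ : p ∈ Q
        · have hpγ : p ∣ γ := by rw [hγdef]; exact Finset.dvd_prod_of_mem (fun p => p) hpQ
          have hpi : (p : ℤ) ∣ i := (Finset.mem_filter.mp hpQ).2
          have hpmt : (p : ℤ) ∣ (m : ℤ) * t := by
            have := dvd_sub hpz hpi
            simpa using this
          have hpmt' : p ∣ m * t := by exact_mod_cast hpmt
          rcases hpp.prime.dvd_mul.mp hpmt' with h | h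
          · have : p ∣ Nat.gcd γ m := Nat.dvd_gcd hpγ h
            rw [Nat.Coprime.gcd_eq_one hcop] at this
            exact hpp.one_lt.ne' (Nat.dvd_one.mp this)
          · have : p ∣ Nat.gcd t γ := Nat.dvd_gcd h hpγ
            rw [Nat.Coprime.gcd_eq_one htcop] at this
            exact hpp.one_lt.ne' (Nat.dvd_one.mp this)
        · have hpm : p ∣ m := by
            rcases hpp.prime.dvd_mul.mp (hnm ▸ hpdn) with h | h
            · exact absurd (hprimeQ p hpp h) hpQ
            · exact h
          have hpi : (p : ℤ) ∣ i := by
            have h1 : (p : ℤ) ∣ (m : ℤ) * t :=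
              Dvd.dvd.mul_right (Int.natCast_dvd_natCast.mpr hpm) _
            have := dvd_sub hpz h1
            simpa using this
          exact hpQ (Finset.mem_filter.mpr ⟨hpn, hpi⟩)
      · -- congruence mod m
        have hmn : (m : ℤ) ∣ (n : ℤ) := ⟨(γ : ℤ), by rw [← hnz]; ring⟩
        have h1 : (b : ℤ) ≡ i + (m : ℤ) * t [ZMOD (m : ℤ)] := hbM.of_dvd hmn
        have h2 : i + (m : ℤ) * t ≡ i [ZMOD (m : ℤ)] := by
          have : (m : ℤ) ∣ i - (i + (m : ℤ) * t) := ⟨-t, by ring⟩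
          exact Int.modEq_iff_dvd.mpr this
        exact h1.trans h2
    · -- left inverse : j (i b) = b
      intro b hb
      beta_reduce
      rw [Finset.mem_filter, Finset.mem_range] at hb
      have hbr := hb.1
      have hbP := hb.2.1
      have hbM := hb.2.2
      have hmd : (m : ℤ) ∣ (b : ℤ) - i := (dvd_sub_comm).mp (Int.ModEq.dvd hbM)
      set s : ℤ := ((b : ℤ) - i) / (m : ℤ) with hsdef
      have hbs : (b : ℤ) = i + (m : ℤ) * s := by
        rw [hsdef, Int.mul_ediv_cancel' hmd]; ring
      have htnn : 0 ≤ s % (γ : ℤ) := Int.emod_nonneg _ (by exact_mod_cast hγpos.ne')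
      have hcast : ((s % (γ : ℤ)).toNat : ℤ) = s % (γ : ℤ) := Int.toNat_of_nonneg htnn
      have hsplit : s % (γ : ℤ) = s - (γ : ℤ) * (s / (γ : ℤ)) := by
        have := Int.emod_add_mul_ediv s (γ : ℤ)
        linarith
      have hkey : (i + (m : ℤ) * ((s % (γ : ℤ)).toNat : ℤ)) % (n : ℤ) = (b : ℤ) := by
        rw [hcast]
        have heq : i + (m : ℤ) * (s % (γ : ℤ)) = (b : ℤ) - (n : ℤ) * (s / (γ : ℤ)) := by
          rw [hbs, ← hnz, hsplit]; ring
        have heq2 : (b : ℤ) - (n : ℤ) * (s / (γ : ℤ)) = (b : ℤ) + (n : ℤ) * (-(s / (γ : ℤ))) := by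
          ring
        rw [heq, heq2, Int.add_mul_emod_self_left]
        exact Int.emod_eq_of_lt (by exact_mod_cast Nat.zero_le b) (by exact_mod_cast hbr)
      rw [hkey]
      exact Int.toNat_natCast b
    · -- right inverse : i (j t) = t
      intro t ht
      beta_reduce
      rw [Finset.mem_filter, Finset.mem_range] at ht
      obtain ⟨htγ, _⟩ := ht
      have h0 : 0 ≤ (i + (m : ℤ) * t) % (n : ℤ) :=
        Int.emod_nonneg _ (by exact_mod_cast hn.ne')
      have hbz : ((((i + (m : ℤ) * t) % (n : ℤ)).toNat : ℕ) : ℤ)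
          = (i + (m : ℤ) * t) % (n : ℤ) := Int.toNat_of_nonneg h0
      set q : ℤ := (i + (m : ℤ) * t) / (n : ℤ) with hqdef
      have hb' : ((((i + (m : ℤ) * t) % (n : ℤ)).toNat : ℕ) : ℤ)
          = i + (m : ℤ) * t - (n : ℤ) * q := by
        rw [hbz, hqdef]
        have := Int.emod_add_mul_ediv (i + (m : ℤ) * t) (n : ℤ)
        linarith
      have hdiv : ((((i + (m : ℤ) * t) % (n : ℤ)).toNat : ℕ) : ℤ) - i = (m : ℤ) * (t - (γ : ℤ) * q) := by
        rw [hb', ← hnz]; ring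
      have hstep : (((((i + (m : ℤ) * t) % (n : ℤ)).toNat : ℕ) : ℤ) - i) / (m : ℤ)
          = t - (γ : ℤ) * q := by
        rw [hdiv, Int.mul_ediv_cancel_left _ (by exact_mod_cast hmpos.ne')]
      have : ((t : ℤ) - (γ : ℤ) * q) % (γ : ℤ) = (t : ℤ) := by
        have heq : (t : ℤ) - (γ : ℤ) * q = (t : ℤ) + (γ : ℤ) * (-q) := by ring
        rw [heq, Int.add_mul_emod_self_left]
        exact Int.emod_eq_of_lt (by exact_mod_cast Nat.zero_le t) (by exact_mod_cast htγ)
      rw [hstep, this]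
      exact Int.toNat_natCast t
    · -- summand
      intro b hb
      beta_reduce
      rw [Finset.mem_filter, Finset.mem_range] at hb
      have hbr := hb.1
      have hbP := hb.2.1
      have hbM := hb.2.2
      have hmd : (m : ℤ) ∣ (b : ℤ) - i := (dvd_sub_comm).mp (Int.ModEq.dvd hbM)
      set s : ℤ := ((b : ℤ) - i) / (m : ℤ) with hsdef
      have hbs : (b : ℤ) = i + (m : ℤ) * s := by
        rw [hsdef, Int.mul_ediv_cancel' hmd]; ring
      have htnn : 0 ≤ s % (γ : ℤ) := Int.emod_nonneg _ (by exact_mod_cast hγpos.ne')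
      have hcast : ((s % (γ : ℤ)).toNat : ℤ) = s % (γ : ℤ) := Int.toNat_of_nonneg htnn
      have hξne : ζ ^ m ≠ 0 := pow_ne_zero _ hζne
      have hξ1 : (ζ ^ m) ^ (γ : ℤ) = 1 := by rw [zpow_natCast]; exact hξ.pow_eq_one
      calc ζ ^ b = ζ ^ ((b : ℤ)) := by rw [zpow_natCast]
      _ = ζ ^ i * (ζ ^ m) ^ s := by
          rw [hbs, zpow_add₀ hζne, zpow_mul, zpow_natCast]
      _ = ζ ^ i * (ζ ^ m) ^ (s % (γ : ℤ)) := by rw [zpow_emod_eq hξne hξ1]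
      _ = ζ ^ i * (ζ ^ m) ^ ((s % (γ : ℤ)).toNat) := by rw [← zpow_natCast (ζ ^ m), hcast]
  rw [key, ← Finset.mul_sum, ramanujan_one hγpos hξ]
  have hμ : ((ArithmeticFunction.moebius γ : ℤ) : ℂ) *
      ((ArithmeticFunction.moebius γ : ℤ) : ℂ) = 1 := by
    rw [← Int.cast_mul, ← sq, ArithmeticFunction.moebius_sq_eq_one_of_squarefree hγsf,
      Int.cast_one]
  linear_combination (-(ζ ^ i)) * hμ
end

section
/- Let G be a finite group, g a central element of G, and u a torsion unit of the integral group ring ℤG with augmentation 1 such that u ≠ g. Then the coefficient-sum of u over the conjugacy class of g (which is just the coefficient of u at g, since g is central) is 0. -/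
/-!
Since `g` is central, `v = u g⁻¹` is again a torsion unit and `v₁ = u_g`, so it suffices to treat
the coefficient at `1`. Left multiplication by `v` on `ℂG` has finite order, hence is
diagonalizable with roots of unity as eigenvalues, and its trace is `|G| · v₁`. If the integer
`v₁` is nonzero, a sum of `|G|` complex numbers of modulus one equals `|G| · v₁` with `|v₁| ≥ 1`,
which forces every eigenvalue to be `v₁`. Then `v = v₁ · 1`, so `u = u_g · g`, and the
augmentation gives `u_g = 1`, i.e. `u = g`.
-/

open MonoidAlgebra Polynomial Module

theorem Complex.mul_re_le_sq {z : ℂ} (hz : ‖z‖ ≤ 1) {c : ℝ} (hc : 1 ≤ c ^ 2) :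
    c * z.re ≤ c ^ 2 := by
  nlinarith [sq_nonneg (c - z.re), Complex.abs_re_le_norm z, abs_nonneg z.re, sq_abs z.re]

theorem Complex.eq_of_mul_re_eq_sq {z : ℂ} (hz : ‖z‖ ≤ 1) {c : ℝ} (hc : 1 ≤ c ^ 2)
    (h : c * z.re = c ^ 2) : z = c := by
  have hz2 : z.re ^ 2 + z.im ^ 2 ≤ 1 := by
    rw [sq z.re, sq z.im, ← Complex.normSq_apply, ← Complex.sq_norm]
    nlinarith [norm_nonneg z]
  have hre : z.re = c := by nlinarith [sq_nonneg (c - z.re)]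
  have him : z.im = 0 := by nlinarith [sq_nonneg z.im]
  exact Complex.ext (by simpa using hre) (by simpa using him)

theorem Multiset.eq_of_sum_eq_card_mul {s : Multiset ℂ} (hs : ∀ z ∈ s, ‖z‖ ≤ 1) {c : ℝ}
    (hc : 1 ≤ c ^ 2) (hsum : s.sum = card s * c) : ∀ z ∈ s, z = c := by
  by_contra! ⟨z, hz, hzc⟩
  have hlt : (s.map fun w => c * w.re).sum < (s.map fun _ => c ^ 2).sum :=
    Multiset.sum_lt_sum (fun w hw => Complex.mul_re_le_sq (hs w hw) hc)
      ⟨z, hz, (Complex.mul_re_le_sq (hs z hz) hc).lt_of_ne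
        fun h => hzc (Complex.eq_of_mul_re_eq_sq (hs z hz) hc h)⟩
  have hre : (s.map fun w => c * w.re).sum = c * (card s * c) := by
    rw [Multiset.sum_map_mul_left]
    simpa [hsum] using congrArg (c * ·) (map_multiset_sum Complex.reAddGroupHom s).symm
  rw [hre, Multiset.map_const', Multiset.sum_replicate, nsmul_eq_mul] at hlt
  nlinarith

namespace Module.End

variable {K V : Type*} [Field K] [AddCommGroup V] [Module K V]

theorem isSemisimple_of_isOfFinOrder [CharZero K] {f : End K V} (hf : IsOfFinOrder f) :
    f.IsSemisimple := by
  obtain ⟨m, hm, hfm⟩ := isOfFinOrder_iff_pow_eq_one.mp hf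
  refine isSemisimple_of_squarefree_aeval_eq_zero
    (X_pow_sub_one_separable_iff.mpr (Nat.cast_ne_zero.mpr hm.ne')).squarefree ?_
  simp [hfm]

theorem pow_eq_one_of_mem_roots_charpoly [FiniteDimensional K V] {f : End K V} {m : ℕ}
    (hfm : f ^ m = 1) {μ : K} (hμ : μ ∈ f.charpoly.roots) : μ ^ m = 1 := by
  have hμ' : f.HasEigenvalue μ :=
    (hasEigenvalue_iff_isRoot_charpoly f μ).mpr (isRoot_of_mem_roots hμ)
  obtain ⟨v, hv⟩ := (hμ'.pow m).exists_hasEigenvector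
  have hv1 : (1 : K) • v = μ ^ m • v := by simpa [hfm] using hv.apply_eq_smul
  exact (smul_left_injective K hv.2 hv1).symm

theorem eq_algebraMap_of_forall_mem_roots_charpoly [IsAlgClosed K] [FiniteDimensional K V]
    {f : End K V} (hf : f.IsSemisimple) {c : K} (hroots : ∀ μ ∈ f.charpoly.roots, μ = c) :
    f = algebraMap K (End K V) c := by
  have hcharpoly : f.charpoly = (X - C c) ^ finrank K V := by
    have hsplit := IsAlgClosed.splits f.charpoly
    rw [hsplit.eq_prod_roots_of_monic f.charpoly_monic, Multiset.eq_replicate.mpr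
      ⟨(splits_iff_card_roots.mp hsplit).trans f.charpoly_natDegree, hroots⟩]
    simp
  have hnil : IsNilpotent (f - algebraMap K (End K V) c) :=
    ⟨finrank K V, by simpa [hcharpoly] using f.aeval_self_charpoly⟩
  exact sub_eq_zero.mp (eq_zero_of_isNilpotent_isSemisimple hnil
    (isSemisimple_sub_algebraMap_iff.mpr hf))

end Module.End

theorem Module.End.eq_algebraMap_of_isOfFinOrder_of_trace_eq {V : Type*} [AddCommGroup V]
    [Module ℂ V] [FiniteDimensional ℂ V] {f : End ℂ V} (hf : IsOfFinOrder f) {c : ℝ}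
    (hc : 1 ≤ c ^ 2) (htr : LinearMap.trace ℂ V f = finrank ℂ V * c) :
    f = algebraMap ℂ (End ℂ V) c := by
  obtain ⟨m, hm, hfm⟩ := isOfFinOrder_iff_pow_eq_one.mp hf
  have hsplit := IsAlgClosed.splits f.charpoly
  refine eq_algebraMap_of_forall_mem_roots_charpoly (isSemisimple_of_isOfFinOrder hf)
    (Multiset.eq_of_sum_eq_card_mul (fun μ hμ => ?_) hc ?_)
  · exact (Complex.norm_eq_one_of_pow_eq_one (pow_eq_one_of_mem_roots_charpoly hfm hμ) hm.ne').le
  · rw [← trace_eq_sum_roots_charpoly_of_splits hsplit, htr,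
      (splits_iff_card_roots.mp hsplit).trans f.charpoly_natDegree]

namespace MonoidAlgebra

variable {G : Type*} [Group G] [Fintype G]

theorem trace_mulLeft {k : Type*} [CommRing k] (w : k[G]) :
    LinearMap.trace k k[G] (LinearMap.mulLeft k w) = Fintype.card G * w.coeff 1 := by
  classical
  rw [LinearMap.trace_eq_matrix_trace k (basis G k), Matrix.trace]
  simp [Algebra.leftMulMatrix_eq_repr_mul, basis, coeff_mul_single_apply]

theorem eq_single_one_of_isOfFinOrder {u : ℤ[G]} (hu : IsOfFinOrder u) (h1 : u.coeff 1 ≠ 0) :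
    u = single 1 (u.coeff 1) := by
  let ψ := mapRingHom G (Int.castRingHom ℂ)
  have hψ : Function.Injective ψ := map_injective _ Int.cast_injective
  have hfin : IsOfFinOrder (LinearMap.mulLeft ℂ (ψ u)) :=
    (Algebra.lmul ℂ ℂ[G]).toMonoidHom.isOfFinOrder (ψ.toMonoidHom.isOfFinOrder hu)
  have hT : LinearMap.mulLeft ℂ (ψ u) = algebraMap ℂ _ ((u.coeff 1 : ℝ) : ℂ) := by
    refine Module.End.eq_algebraMap_of_isOfFinOrder_of_trace_eq hfin ?_ ?_
    · rw [one_le_sq_iff_one_le_abs]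
      exact_mod_cast Int.one_le_abs h1
    · rw [trace_mulLeft, finrank_eq_card_basis (basis G ℂ)]
      simp [ψ]
  apply hψ
  simpa [ψ, intCast_def] using LinearMap.congr_fun hT 1

theorem eq_single_of_isOfFinOrder_of_mem_center {g : G} (hg : g ∈ Subgroup.center G)
    {u : ℤ[G]} (hu : IsOfFinOrder u) (hug : u.coeff g ≠ 0) : u = single g (u.coeff g) := by
  have hcomm : Commute (of ℤ G g⁻¹) u :=
    of_commute (fun x => (Subgroup.mem_center_iff.mp (inv_mem hg) x).symm) u
  have hv : IsOfFinOrder (u * of ℤ G g⁻¹) :=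
    hcomm.symm.isOfFinOrder_mul hu ((of ℤ G).isOfFinOrder (isOfFinOrder_of_finite _))
  have hv1 : (u * of ℤ G g⁻¹).coeff 1 = u.coeff g := by simp [coeff_mul_single_apply]
  calc u = u * of ℤ G g⁻¹ * of ℤ G g := by
        rw [mul_assoc, ← map_mul, inv_mul_cancel, map_one, mul_one]
    _ = single g (u.coeff g) := by
      rw [eq_single_one_of_isOfFinOrder hv (hv1 ▸ hug), hv1, of_apply, single_mul_single]
      simp

end MonoidAlgebra

/-- Berman–Higman: if `u` is a torsion unit of augmentation 1 in `ℤG`, `g` is central in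
the finite group `G` and `u ≠ g`, then the coefficient of `u` at `g` is `0`. -/
theorem stmt16 (G : Type*) [Group G] [Fintype G] (g : G)
    (hg : g ∈ Subgroup.center G)
    (u : MonoidAlgebra ℤ G)
    (htor : ∃ m : ℕ, 0 < m ∧ u ^ m = 1)
    (haug : (u.coeff.sum fun _ c => c) = 1)
    (hne : u ≠ MonoidAlgebra.of ℤ G g) :
    u.coeff g = 0 := by
  by_contra hug
  have hu := eq_single_of_isOfFinOrder_of_mem_center hg (isOfFinOrder_iff_pow_eq_one.mpr htor) hug
  have hc : u.coeff g = 1 := by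
    rwa [hu, coeff_single, Finsupp.sum_single_index rfl] at haug
  exact hne (hu.trans (by rw [hc, of_apply]))
end
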